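/- If a non-increasing probability distribution P = (p_1,...,p_n), n ≥ 3, satisfying the AUH constraints maximizes the average length L(P), then p_1 = q_2 = sum_{i≥3} p_i. -/

import Mathlib

open Finset

/-- A non-increasing probability distribution on symbols `1,…,n` satisfying the
anti-uniform Huffman (AUH) constraints. -/
def IsAUH (n : ℕ) (p : ℕ → ℝ) : Prop :=
  (∀ i ∈ Finset.Icc 1 n, 0 ≤ p i) ∧
  (∀ i j, 1 ≤ i → i ≤ j → j ≤ n → p j ≤ p i) ∧
  (∑ i ∈ Finset.Icc 1 n, p i = 1) ∧
  (∀ i, 1 ≤ i → i ≤ n - 2 → ∑ j ∈ Finset.Icc (i + 2) n, p j ≤ p i)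

/-- Average length of the anti-uniform code on `n` symbols. -/
noncomputable def avgLen (n : ℕ) (p : ℕ → ℝ) : ℝ :=
  ∑ i ∈ Finset.Icc 1 (n - 1), (i : ℝ) * p i + ((n : ℝ) - 1) * p n

/-!
If the first AUH constraint is slack, `q₃ < p₁`, the average length can be increased without
leaving the AUH polytope. When `p₂ < p₁`, moving a little mass from symbol 1 to symbol 2 gains
exactly that mass. When `p₂ = p₁`, first move mass from symbol 2 to symbol 3: this does not
decrease the length (for `n = 3` both symbols have length 2) and it breaks the tie, so the
first move applies afterwards.
-/

noncomputable def shiftMass (p : ℕ → ℝ) (a : ℕ) (ε : ℝ) : ℕ → ℝ :=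
  p + Pi.single (a + 1) ε - Pi.single a ε

section shiftMass

variable {p : ℕ → ℝ} {a : ℕ} {ε : ℝ}

lemma shiftMass_apply_self : shiftMass p a ε a = p a - ε := by
  simp [shiftMass]

lemma shiftMass_apply_of_ne {i : ℕ} (hia : i ≠ a) (hia' : i ≠ a + 1) :
    shiftMass p a ε i = p i := by
  simp [shiftMass, hia, hia']

lemma sum_shiftMass (s : Finset ℕ) :
    ∑ i ∈ s, shiftMass p a ε i
      = ∑ i ∈ s, p i + (if a + 1 ∈ s then ε else 0) - (if a ∈ s then ε else 0) := by
  simp only [shiftMass, Pi.add_apply, Pi.sub_apply, sum_add_distrib, sum_sub_distrib,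
    sum_pi_single']

lemma avgLen_shiftMass {n : ℕ} (ha : 1 ≤ a) (han : a + 1 ≤ n) :
    avgLen n (shiftMass p a ε) = avgLen n p + if a + 1 < n then ε else 0 := by
  simp only [avgLen, shiftMass, Pi.add_apply, Pi.sub_apply, mul_add, mul_sub, sum_add_distrib,
    sum_sub_distrib, Pi.single_apply, mul_ite, mul_zero, sum_ite_eq', mem_Icc]
  split_ifs <;> first | omega | (subst_vars; push_cast; ring)

lemma isAUH_shiftMass {n : ℕ} (hp : IsAUH n p) (ha : 1 ≤ a) (han : a + 1 ≤ n) (hε : 0 ≤ ε)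
    (hgap : p (a + 1) + 2 * ε ≤ p a)
    (htail : ∀ i ∈ Icc 1 a, ∑ j ∈ Icc (i + 2) n, p j + ε ≤ p i) :
    IsAUH n (shiftMass p a ε) := by
  obtain ⟨hnonneg, hanti, hsum, hauh⟩ := hp
  have hmem : ∀ {i}, 1 ≤ i → i ≤ n → i ∈ Icc 1 n := fun h1 h2 => mem_Icc.2 ⟨h1, h2⟩
  refine ⟨fun i hi => ?_, fun i j hi hij hjn => ?_, ?_, fun i hi hin => ?_⟩
  · have := hnonneg i hi
    have := hnonneg (a + 1) (hmem (by omega) han)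
    simp only [mem_Icc] at hi
    simp only [shiftMass, Pi.add_apply, Pi.sub_apply, Pi.single_apply]
    grind
  · have := hanti i j hi hij hjn
    have := hanti (a + 1) j (by omega)
    have := hanti i a hi
    simp only [shiftMass, Pi.add_apply, Pi.sub_apply, Pi.single_apply]
    grind
  · rw [sum_shiftMass, if_pos (hmem (by omega) han), if_pos (hmem ha (by omega)), hsum]
    ring
  · have := hauh i hi hin
    have := htail i
    rw [sum_shiftMass]
    simp only [shiftMass, Pi.add_apply, Pi.sub_apply, Pi.single_apply, mem_Icc]
    grind

end shiftMass

section Maximizer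

variable {n : ℕ} {p : ℕ → ℝ}

lemma IsAUH.exists_avgLen_gt_of_lt_of_sum_lt (hp : IsAUH n p) (hn : 3 ≤ n) (h21 : p 2 < p 1)
    (hslack : ∑ i ∈ Icc 3 n, p i < p 1) : ∃ p', IsAUH n p' ∧ avgLen n p < avgLen n p' := by
  set ε := min ((p 1 - p 2) / 2) (p 1 - ∑ i ∈ Icc 3 n, p i)
  have hε : 0 < ε := lt_min (by linarith) (by linarith)
  have hε_gap : ε ≤ (p 1 - p 2) / 2 := min_le_left _ _
  have hε_slack : ε ≤ p 1 - ∑ i ∈ Icc 3 n, p i := min_le_right _ _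
  refine ⟨shiftMass p 1 ε, isAUH_shiftMass hp le_rfl (by omega) hε.le (by linarith) ?_, ?_⟩
  · intro i hi
    obtain rfl : i = 1 := by simpa using hi
    linarith
  · rw [avgLen_shiftMass le_rfl (by omega), if_pos (by omega)]
    linarith

lemma IsAUH.exists_avgLen_ge_of_eq_of_sum_lt (hp : IsAUH n p) (hn : 3 ≤ n) (h21 : p 2 = p 1)
    (hslack : ∑ i ∈ Icc 3 n, p i < p 1) :
    ∃ p', IsAUH n p' ∧ avgLen n p ≤ avgLen n p' ∧ p' 2 < p' 1 ∧
      ∑ i ∈ Icc 3 n, p' i < p' 1 := by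
  set q := ∑ i ∈ Icc 3 n, p i
  set ε := (p 1 - q) / 2 with hε_def
  have hε : 0 < ε := by linarith
  have hnonneg : ∀ k, 1 ≤ k → ∀ i ∈ Icc k n, 0 ≤ p i := fun k hk i hi =>
    hp.1 i (Icc_subset_Icc_left hk hi)
  have hp3 : p 3 ≤ q := single_le_sum (hnonneg 3 (by norm_num)) (mem_Icc.2 ⟨le_rfl, hn⟩)
  have hq4 : ∑ i ∈ Icc 4 n, p i ≤ q :=
    sum_le_sum_of_subset_of_nonneg (Icc_subset_Icc_left (by norm_num))
      fun i hi _ => hnonneg 3 (by norm_num) i hi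
  refine ⟨shiftMass p 2 ε,
    isAUH_shiftMass hp (by norm_num) (by omega) hε.le (by linarith) ?_, ?_, ?_, ?_⟩
  · intro i hi
    obtain rfl | rfl : i = 1 ∨ i = 2 := by simp only [mem_Icc] at hi; omega
    all_goals linarith
  · rw [avgLen_shiftMass (by norm_num) (by omega)]
    split_ifs <;> linarith
  · rw [shiftMass_apply_self, shiftMass_apply_of_ne (by norm_num) (by norm_num)]
    linarith
  · rw [sum_shiftMass, if_pos (mem_Icc.2 ⟨le_rfl, hn⟩), if_neg (by simp),
      shiftMass_apply_of_ne (by norm_num) (by norm_num)]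
    linarith

lemma IsAUH.exists_avgLen_gt_of_sum_lt (hp : IsAUH n p) (hn : 3 ≤ n)
    (hslack : ∑ i ∈ Icc 3 n, p i < p 1) : ∃ p', IsAUH n p' ∧ avgLen n p < avgLen n p' := by
  rcases (hp.2.1 1 2 le_rfl one_le_two (by omega)).lt_or_eq with h21 | h21
  · exact hp.exists_avgLen_gt_of_lt_of_sum_lt hn h21 hslack
  · obtain ⟨p', hp', hle, h21', hslack'⟩ := hp.exists_avgLen_ge_of_eq_of_sum_lt hn h21 hslack
    obtain ⟨p'', hp'', hlt⟩ := hp'.exists_avgLen_gt_of_lt_of_sum_lt hn h21' hslack'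
    exact ⟨p'', hp'', hle.trans_lt hlt⟩

end Maximizer

theorem maxAvgLen_first_eq (n : ℕ) (hn : 3 ≤ n) (p : ℕ → ℝ) (hp : IsAUH n p)
    (hmax : ∀ p' : ℕ → ℝ, IsAUH n p' → avgLen n p' ≤ avgLen n p) :
    p 1 = ∑ i ∈ Finset.Icc 3 n, p i := by
  by_contra hne
  have hslack : ∑ i ∈ Icc 3 n, p i < p 1 :=
    (hp.2.2.2 1 le_rfl (by omega)).lt_of_ne (Ne.symm hne)
  obtain ⟨p', hp', hlt⟩ := hp.exists_avgLen_gt_of_sum_lt hn hslack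
  exact (hmax p' hp').not_gt hlt
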